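/- Let G and H be groups and τ : G → H a half-isomorphism. Then for every subgroup K of G, the image τ(K) is a subgroup of H. -/

import Mathlib

/-!
A half-isomorphism need not be multiplicative, but it is on commuting pairs: if `x` and `y`
commute and `τ (x * y) = τ y * τ x`, comparing the values of `τ` on `x * y * y` and on
`(x * y) * (x * y) = x * (x * (y * y))` forces `τ x` and `τ y` to commute. Hence, for an injective
`τ`, whenever `τ (x * y) ≠ τ x * τ y` one has `τ (y * x) = τ x * τ y`, so a product of two points
of `τ '' K` is again the image of a product of elements of `K`.
-/

def IsHalfHom {G H : Type*} [Mul G] [Mul H] (τ : G → H) : Prop :=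
  ∀ x y : G, τ (x * y) = τ x * τ y ∨ τ (x * y) = τ y * τ x

namespace IsHalfHom

variable {G H : Type*} {τ : G → H}

theorem map_mul_self [Mul G] [Mul H] (hτ : IsHalfHom τ) (x : G) : τ (x * x) = τ x * τ x :=
  (hτ x x).elim id id

section Semigroup

variable [Semigroup G] [Semigroup H] [IsCancelMul H]

theorem commute_map_of_map_mul_eq_mul_swap (hτ : IsHalfHom τ) {x y : G} (hxy : Commute x y)
    (h : τ (x * y) = τ y * τ x) : Commute (τ x) (τ y) := by
  set a := τ x
  set b := τ y
  have hxyy : τ (x * (y * y)) = b * (b * a) ∨ Commute a b := by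
    have h₁ : τ (x * (y * y)) = b * a * b ∨ τ (x * (y * y)) = b * (b * a) := by
      rw [← mul_assoc, ← h]; exact hτ (x * y) y
    have h₂ : τ (x * (y * y)) = a * (b * b) ∨ τ (x * (y * y)) = b * b * a := by
      rw [← hτ.map_mul_self]; exact hτ x (y * y)
    rcases h₁ with h₁ | h₁
    · right
      rcases h₂ with h₂ | h₂ <;> rw [h₁] at h₂
      · simpa only [commute_iff_eq, ← mul_assoc, mul_left_inj, eq_comm] using h₂
      · simpa only [commute_iff_eq, mul_assoc, mul_right_inj] using h₂
    · exact .inl h₁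
  rcases hxyy with hxyy | hab
  · have hsq : x * y * (x * y) = x * (x * (y * y)) := by
      rw [mul_assoc, ← mul_assoc y, ← hxy.eq, mul_assoc]
    have h₁ : τ (x * (x * (y * y))) = b * a * (b * a) := by
      rw [← h, ← hτ.map_mul_self, hsq]
    have h₂ : τ (x * (x * (y * y))) = a * (b * (b * a)) ∨
        τ (x * (x * (y * y))) = b * (b * a) * a := by
      rw [← hxyy]; exact hτ x (x * (y * y))
    rcases h₂ with h₂ | h₂ <;> rw [h₁] at h₂
    · simpa only [commute_iff_eq, ← mul_assoc, mul_left_inj, eq_comm] using h₂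
    · simp only [mul_assoc, mul_right_inj] at h₂
      simpa only [commute_iff_eq, ← mul_assoc, mul_left_inj] using h₂
  · exact hab

theorem commute_map (hτ : IsHalfHom τ) {x y : G} (hxy : Commute x y) : Commute (τ x) (τ y) := by
  rcases hτ x y with h | h
  · refine (hτ.commute_map_of_map_mul_eq_mul_swap hxy.symm ?_).symm
    rw [← hxy.eq, h]
  · exact hτ.commute_map_of_map_mul_eq_mul_swap hxy h

theorem mul_eq_map_mul_or_map_mul_swap (hτ : IsHalfHom τ) (hinj : Function.Injective τ)
    (x y : G) : τ x * τ y = τ (x * y) ∨ τ x * τ y = τ (y * x) := by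
  rcases hτ x y with h | h
  · exact .inl h.symm
  rcases hτ y x with h' | h'
  · have hxy : Commute x y := hinj (h.trans h'.symm)
    exact .inl ((hτ.commute_map hxy).eq.trans h.symm)
  · exact .inr h'.symm

end Semigroup

theorem map_one [MulOneClass G] [Monoid H] [IsLeftCancelMul H] (hτ : IsHalfHom τ) : τ 1 = 1 := by
  simpa using hτ.map_mul_self (1 : G)

theorem map_inv [Group G] [Group H] (hτ : IsHalfHom τ) (x : G) : τ x⁻¹ = (τ x)⁻¹ := by
  rcases hτ x x⁻¹ with h | h <;> rw [mul_inv_cancel, hτ.map_one] at h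
  · exact eq_inv_of_mul_eq_one_right h.symm
  · exact eq_inv_of_mul_eq_one_left h.symm

end IsHalfHom

/-- The image of a subgroup under a half-isomorphism of groups is a subgroup. -/
theorem half_isomorphism_image_subgroup {G H : Type*} [Group G] [Group H] (τ : G → H)
    (hbij : Function.Bijective τ)
    (hhalf : ∀ x y : G, τ (x * y) = τ x * τ y ∨ τ (x * y) = τ y * τ x) :
    ∀ K : Subgroup G, ∃ K' : Subgroup H, (K' : Set H) = τ '' (K : Set G) := by
  have hτ : IsHalfHom τ := hhalf
  intro K
  refine ⟨{ carrier := τ '' K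
            one_mem' := ⟨1, K.one_mem, hτ.map_one⟩
            mul_mem' := ?_
            inv_mem' := ?_ }, rfl⟩
  · rintro _ _ ⟨x, hx, rfl⟩ ⟨y, hy, rfl⟩
    rcases hτ.mul_eq_map_mul_or_map_mul_swap hbij.injective x y with h | h
    exacts [⟨x * y, K.mul_mem hx hy, h.symm⟩, ⟨y * x, K.mul_mem hy hx, h.symm⟩]
  · rintro _ ⟨x, hx, rfl⟩
    exact ⟨x⁻¹, K.inv_mem hx, hτ.map_inv x⟩
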